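/- The enlarged radii are uniformly controlled and the enlarged supports are localized: for every k ∈ ℤ^d one has ρ̃_{h,k} ≤ ρ̃ := ρ⁰ (1 + (hρ⁰/2) |F̄|₁² |B̄|₂), and Σ̃_{h,k} ⊆ B_∞(F̄(x⁰_k), h ρ̃ |F̄|₁). -/

import Mathlib

open scoped NNReal
open Set

/-- Grid node `x⁰_k := h k`. -/
noncomputable def node (d : ℕ) (h : ℝ) (k : Fin d → ℤ) : Fin d → ℝ :=
  fun i => h * (k i : ℝ)

/-- Particle shape function `φ⁰_{h,k}(x) := h^{-d} φ(h⁻¹ x - k)`. -/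
noncomputable def part (d : ℕ) (h : ℝ) (φ : (Fin d → ℝ) → ℝ)
    (k : Fin d → ℤ) (x : Fin d → ℝ) : ℝ :=
  (h ^ d)⁻¹ * φ (fun i => x i / h - (k i : ℝ))

/-- Partial derivative `∂_l g`. -/
noncomputable def pd (d : ℕ) (l : Fin d) (g : (Fin d → ℝ) → ℝ) : (Fin d → ℝ) → ℝ :=
  fun x => fderiv ℝ g x (Pi.single l 1)

/-- Linearized backward flow `B̄_{(1),k}(x) := x⁰_k + J_k⁻¹ (x − F̄(x⁰_k))`. -/
noncomputable def B1 (d : ℕ) (h : ℝ) (F : (Fin d → ℝ) ≃ (Fin d → ℝ))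
    (k : Fin d → ℤ) (x : Fin d → ℝ) : Fin d → ℝ :=
  node d h k +
    fderiv ℝ (F.symm : (Fin d → ℝ) → (Fin d → ℝ)) (F (node d h k)) (x - F (node d h k))

/-- Linearized forward flow `F̄_{(1),k}(x̂) := F̄(x⁰_k) + J_k (x̂ − x⁰_k)`. -/
noncomputable def F1 (d : ℕ) (h : ℝ) (F : (Fin d → ℝ) ≃ (Fin d → ℝ))
    (k : Fin d → ℤ) (y : Fin d → ℝ) : Fin d → ℝ :=
  F (node d h k) +
    fderiv ℝ (F : (Fin d → ℝ) → (Fin d → ℝ)) (node d h k) (y - node d h k)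

/-- Enlarged radius `ρ̃_{h,k} := ρ⁰ + h⁻¹ sup_{x ∈ F̄(Σ⁰_{h,k})} ‖B̄_{(1),k}(x) − B̄(x)‖_∞`. -/
noncomputable def ρt (d : ℕ) (h ρ0 : ℝ) (φ : (Fin d → ℝ) → ℝ)
    (F : (Fin d → ℝ) ≃ (Fin d → ℝ)) (k : Fin d → ℤ) : ℝ :=
  ρ0 + h⁻¹ * ⨆ x : (F '' Function.support (part d h φ k)),
      ‖B1 d h F k x.1 - F.symm x.1‖

/-- Enlarged a priori support `Σ̃_{h,k} := F̄_{(1),k}(B_∞(x⁰_k, h ρ̃_{h,k}))`. -/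
noncomputable def St (d : ℕ) (h ρ0 : ℝ) (φ : (Fin d → ℝ) → ℝ)
    (F : (Fin d → ℝ) ≃ (Fin d → ℝ)) (k : Fin d → ℤ) : Set (Fin d → ℝ) :=
  F1 d h F k '' Metric.closedBall (node d h k) (h * ρt d h ρ0 φ F k)

/-!
Write `B = F⁻¹` and `a = F(x⁰_k)`. Since `B(a) = x⁰_k`, the linearisation defect
`B_{(1),k}(y) - B(y)` is minus the second-order Taylor remainder of `B` at `a`, so it is at most
`|B|₂/2 ‖y - a‖²`. On `F(Σ⁰_{h,k})` the mean value inequality gives `‖y - a‖ ≤ |F|₁ h ρ⁰`, which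
bounds `ρ̃_{h,k}`. The support bound follows since `F_{(1),k} - F(x⁰_k)` is the Jacobian at `x⁰_k`,
of norm at most `|F|₁`. The seminorms `|·|₁` and `|·|₂` dominate the operator norms of the first two
derivatives for the max norm, because the operator norm of a linear map on `ℓ^∞` is its largest
absolute row sum.
-/

open Metric

section RowSum

variable {ι ι' κ : Type*} [Fintype ι] [DecidableEq ι]

theorem abs_apply_le_norm_mul_sum_abs_apply_single (L : (ι → ℝ) →L[ℝ] ℝ) (v : ι → ℝ) :
    |L v| ≤ ‖v‖ * ∑ l, |L (Pi.single l 1)| := by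
  have hL : L v = ∑ l, v l * L (Pi.single l 1) := by
    conv_lhs => rw [← Finset.univ_sum_single v]
    simp only [map_sum]
    refine Finset.sum_congr rfl fun l _ => ?_
    rw [← smul_eq_mul, ← map_smul, ← Pi.single_smul', smul_eq_mul, mul_one]
  calc |L v| ≤ ∑ l, |v l| * |L (Pi.single l 1)| := by
        rw [hL]
        exact (Finset.abs_sum_le_sum_abs _ _).trans_eq (by simp only [abs_mul])
    _ ≤ ∑ l, ‖v‖ * |L (Pi.single l 1)| := by
        gcongr with l
        exact norm_le_pi_norm v l
    _ = ‖v‖ * ∑ l, |L (Pi.single l 1)| := Finset.mul_sum _ _ _ |>.symm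

variable [Fintype κ] [Nonempty κ]

theorem ContinuousLinearMap.norm_le_of_sum_abs_apply_single_le (A : (ι → ℝ) →L[ℝ] κ → ℝ)
    {c : ℝ} (hA : ∀ i, ∑ l, |A (Pi.single l 1) i| ≤ c) : ‖A‖ ≤ c := by
  have hc : 0 ≤ c := (Finset.sum_nonneg fun _ _ => abs_nonneg _).trans (hA (Classical.arbitrary κ))
  refine A.opNorm_le_bound hc fun v => (pi_norm_le_iff_of_nonneg (by positivity)).2 fun i => ?_
  calc ‖A v i‖ = |(ContinuousLinearMap.proj i ∘L A) v| := Real.norm_eq_abs _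
    _ ≤ ‖v‖ * ∑ l, |A (Pi.single l 1) i| := abs_apply_le_norm_mul_sum_abs_apply_single _ v
    _ ≤ c * ‖v‖ := by rw [mul_comm]; gcongr; exact hA i

theorem ContinuousLinearMap.norm_le_of_sum_sum_abs_apply_single_le [Fintype ι'] [DecidableEq ι']
    (A : (ι → ℝ) →L[ℝ] (ι' → ℝ) →L[ℝ] κ → ℝ) {c : ℝ}
    (hA : ∀ i, ∑ l₁, ∑ l₂, |A (Pi.single l₁ 1) (Pi.single l₂ 1) i| ≤ c) : ‖A‖ ≤ c := by
  have hc : 0 ≤ c := (Finset.sum_nonneg fun _ _ => Finset.sum_nonneg fun _ _ => abs_nonneg _).trans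
    (hA (Classical.arbitrary κ))
  refine A.opNorm_le_bound₂ hc fun v w => (pi_norm_le_iff_of_nonneg (by positivity)).2 fun i => ?_
  calc ‖A v w i‖ = |(ContinuousLinearMap.proj i ∘L A.flip w) v| := Real.norm_eq_abs _
    _ ≤ ‖v‖ * ∑ l₁, |(ContinuousLinearMap.proj i ∘L A (Pi.single l₁ 1)) w| :=
        abs_apply_le_norm_mul_sum_abs_apply_single _ v
    _ ≤ ‖v‖ * ∑ l₁, ‖w‖ * ∑ l₂, |A (Pi.single l₁ 1) (Pi.single l₂ 1) i| := by
        gcongr with l₁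
        exact abs_apply_le_norm_mul_sum_abs_apply_single _ w
    _ = ‖v‖ * ‖w‖ * ∑ l₁, ∑ l₂, |A (Pi.single l₁ 1) (Pi.single l₂ 1) i| := by
        rw [mul_assoc, ← Finset.mul_sum]
    _ ≤ ‖v‖ * ‖w‖ * c := by gcongr; exact hA i
    _ = c * ‖v‖ * ‖w‖ := by ring

end RowSum

theorem norm_sub_sub_deriv_le_of_norm_deriv_deriv_le {E : Type*} [NormedAddCommGroup E]
    [NormedSpace ℝ E] {f f' f'' : ℝ → E} {M : ℝ}
    (hf : ∀ t ∈ Icc (0 : ℝ) 1, HasDerivAt f (f' t) t)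
    (hf' : ∀ t ∈ Icc (0 : ℝ) 1, HasDerivAt f' (f'' t) t)
    (hM : ∀ t ∈ Icc (0 : ℝ) 1, ‖f'' t‖ ≤ M) :
    ‖f 1 - f 0 - f' 0‖ ≤ M / 2 := by
  have hf'_sub : ∀ t ∈ Icc (0 : ℝ) 1, ‖f' t - f' 0‖ ≤ M * (t - 0) :=
    norm_image_sub_le_of_norm_deriv_le_segment' (fun t ht => (hf' t ht).hasDerivWithinAt)
      fun t ht => hM t (Ico_subset_Icc_self ht)
  have hg : ∀ t ∈ Icc (0 : ℝ) 1,
      HasDerivAt (fun s => f s - f 0 - s • f' 0) (f' t - f' 0) t := fun t ht => by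
    simpa using ((hf t ht).sub_const (f 0)).fun_sub ((hasDerivAt_id' t).smul_const (f' 0))
  have hB : ∀ t, HasDerivAt (fun s : ℝ => M / 2 * s ^ 2) (M * t) t := fun t => by
    refine ((hasDerivAt_pow 2 t).const_mul (M / 2)).congr_deriv ?_
    norm_num
    ring
  -- `‖f' t - f' 0‖ ≤ M t` lets `M t² / 2` act as an upper barrier for the first-order remainder.
  have := image_norm_le_of_norm_deriv_right_le_deriv_boundary
    (fun t ht => (hg t ht).continuousAt.continuousWithinAt)
    (fun t ht => (hg t (Ico_subset_Icc_self ht)).hasDerivWithinAt) (by simp) hB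
    (fun t ht => by simpa using hf'_sub t (Ico_subset_Icc_self ht)) (right_mem_Icc.2 zero_le_one)
  simpa using this

theorem norm_image_add_sub_sub_fderiv_le {E G : Type*} [NormedAddCommGroup E] [NormedSpace ℝ E]
    [NormedAddCommGroup G] [NormedSpace ℝ G] {g : E → G} (hg : ContDiff ℝ 2 g) {M : ℝ}
    (hM : ∀ x, ‖fderiv ℝ (fderiv ℝ g) x‖ ≤ M) (a u : E) :
    ‖g (a + u) - g a - fderiv ℝ g a u‖ ≤ M / 2 * ‖u‖ ^ 2 := by
  have hline : ∀ t : ℝ, HasDerivAt (fun s : ℝ => a + s • u) u t := fun t => by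
    simpa using ((hasDerivAt_id t).smul_const u).const_add a
  have hDg : Differentiable ℝ (fderiv ℝ g) :=
    (hg.fderiv_right le_rfl).differentiable one_ne_zero
  have := norm_sub_sub_deriv_le_of_norm_deriv_deriv_le (M := M * ‖u‖ ^ 2)
    (f' := fun t => fderiv ℝ g (a + t • u) u)
    (f'' := fun t => fderiv ℝ (fderiv ℝ g) (a + t • u) u u)
    (fun t _ => ((hg.differentiable two_ne_zero) _).hasFDerivAt.comp_hasDerivAt t (hline t))
    (fun t _ => ((ContinuousLinearMap.apply ℝ G u).hasFDerivAt.comp _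
      (hDg _).hasFDerivAt).comp_hasDerivAt t (hline t))
    (fun t _ => ((fderiv ℝ (fderiv ℝ g) _).le_opNorm₂ u u).trans (by
      rw [mul_assoc, ← sq]; gcongr; exact hM _))
  simpa [mul_div_right_comm] using this

section Flow

variable {d : ℕ}

section PartialDerivatives

variable {κ : Type*} {f : (Fin d → ℝ) → κ → ℝ} {x : Fin d → ℝ}

theorem pd_apply_eq_fderiv_apply_single (hf : DifferentiableAt ℝ f x) (l : Fin d) (i : κ) :
    pd d l (fun y => f y i) x = fderiv ℝ f x (Pi.single l 1) i := by
  rw [pd, fderiv_apply hf i]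
  rfl

variable [Fintype κ]

theorem pd_pd_apply_eq_fderiv_fderiv_apply_single (hf : Differentiable ℝ f)
    (hf' : DifferentiableAt ℝ (fderiv ℝ f) x) (l₁ l₂ : Fin d) (i : κ) :
    pd d l₁ (pd d l₂ (fun y => f y i)) x =
      fderiv ℝ (fderiv ℝ f) x (Pi.single l₁ 1) (Pi.single l₂ 1) i := by
  let P : ((Fin d → ℝ) →L[ℝ] κ → ℝ) →L[ℝ] ℝ :=
    ContinuousLinearMap.proj i ∘L ContinuousLinearMap.apply ℝ (κ → ℝ) (Pi.single l₂ 1)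
  have hP : pd d l₂ (fun y => f y i) = fun y => P (fderiv ℝ f y) :=
    funext fun y => pd_apply_eq_fderiv_apply_single (hf y) l₂ i
  have hPD : HasFDerivAt (fun y => P (fderiv ℝ f y)) (P ∘L fderiv ℝ (fderiv ℝ f) x) x :=
    P.hasFDerivAt.comp x hf'.hasFDerivAt
  rw [pd, hP, hPD.fderiv]
  rfl

variable [Nonempty κ] {c : ℝ}

theorem norm_fderiv_le_of_sum_abs_pd_le (hf : DifferentiableAt ℝ f x)
    (hc : ∀ i, ∑ l, |pd d l (fun y => f y i) x| ≤ c) : ‖fderiv ℝ f x‖ ≤ c :=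
  (fderiv ℝ f x).norm_le_of_sum_abs_apply_single_le fun i => by
    simpa only [pd_apply_eq_fderiv_apply_single hf] using hc i

theorem norm_fderiv_fderiv_le_of_sum_sum_abs_pd_pd_le (hf : Differentiable ℝ f)
    (hf' : DifferentiableAt ℝ (fderiv ℝ f) x)
    (hc : ∀ i, ∑ l₁, ∑ l₂, |pd d l₁ (pd d l₂ (fun y => f y i)) x| ≤ c) :
    ‖fderiv ℝ (fderiv ℝ f) x‖ ≤ c :=
  (fderiv ℝ (fderiv ℝ f) x).norm_le_of_sum_sum_abs_apply_single_le fun i => by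
    simpa only [pd_pd_apply_eq_fderiv_fderiv_apply_single hf hf'] using hc i

end PartialDerivatives

variable {h ρ0 : ℝ} {φ : (Fin d → ℝ) → ℝ} {F : (Fin d → ℝ) ≃ (Fin d → ℝ)} {k : Fin d → ℤ}

theorem norm_sub_node_le_of_mem_support_part (hh : 0 < h) (hφ : ∀ x, φ x ≠ 0 → ‖x‖ ≤ ρ0)
    {z : Fin d → ℝ} (hz : z ∈ Function.support (part d h φ k)) : ‖z - node d h k‖ ≤ h * ρ0 := by
  have hz_sub : z - node d h k = h • fun i => z i / h - k i := by
    ext i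
    simp only [node, Pi.sub_apply, Pi.smul_apply, smul_eq_mul]
    field_simp
  rw [hz_sub, norm_smul, Real.norm_of_nonneg hh.le]
  exact mul_le_mul_of_nonneg_left (hφ _ (right_ne_zero_of_mul hz)) hh.le

theorem norm_B1_sub_symm_le (hB : ContDiff ℝ 2 F.symm) {M : ℝ}
    (hM : ∀ x, ‖fderiv ℝ (fderiv ℝ F.symm) x‖ ≤ M) (y : Fin d → ℝ) :
    ‖B1 d h F k y - F.symm y‖ ≤ M / 2 * ‖y - F (node d h k)‖ ^ 2 := by
  set a := F (node d h k)
  have hdefect : B1 d h F k y - F.symm y =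
      -(F.symm (a + (y - a)) - F.symm a - fderiv ℝ F.symm a (y - a)) := by
    rw [add_sub_cancel, F.symm_apply_apply, B1]
    abel
  rw [hdefect, norm_neg]
  exact norm_image_add_sub_sub_fderiv_le hB hM a (y - a)

theorem ρt_le_of_forall_norm_B1_sub_symm_le (hh : 0 ≤ h) {D : ℝ} (hD : 0 ≤ D)
    (H : ∀ z ∈ Function.support (part d h φ k), ‖B1 d h F k (F z) - F.symm (F z)‖ ≤ D) :
    ρt d h ρ0 φ F k ≤ ρ0 + h⁻¹ * D := by
  unfold ρt
  gcongr
  refine Real.iSup_le ?_ hD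
  rintro ⟨_, z, hz, rfl⟩
  exact H z hz

theorem ρt_le_of_norm_fderiv_le (hh : 0 < h) (hφ : ∀ x, φ x ≠ 0 → ‖x‖ ≤ ρ0)
    (hF : Differentiable ℝ F) (hB : ContDiff ℝ 2 F.symm) {c₁ c₂ : ℝ}
    (hDF : ∀ x, ‖fderiv ℝ F x‖ ≤ c₁) (hD2B : ∀ x, ‖fderiv ℝ (fderiv ℝ F.symm) x‖ ≤ c₂) :
    ρt d h ρ0 φ F k ≤ ρ0 * (1 + h * ρ0 / 2 * c₁ ^ 2 * c₂) := by
  have hc₁ : 0 ≤ c₁ := (norm_nonneg _).trans (hDF 0)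
  have hc₂ : 0 ≤ c₂ := (ContinuousLinearMap.opNorm_nonneg _).trans (hD2B 0)
  have hF_lip : ∀ z w, ‖F z - F w‖ ≤ c₁ * ‖z - w‖ := fun z w =>
    convex_univ.norm_image_sub_le_of_norm_fderiv_le (fun x _ => hF x) (fun x _ => hDF x)
      (mem_univ w) (mem_univ z)
  calc ρt d h ρ0 φ F k ≤ ρ0 + h⁻¹ * (c₂ / 2 * (c₁ * (h * ρ0)) ^ 2) := by
        refine ρt_le_of_forall_norm_B1_sub_symm_le hh.le (by positivity) fun z hz => ?_
        refine (norm_B1_sub_symm_le hB hD2B _).trans ?_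
        gcongr
        exact (hF_lip _ _).trans
          (by gcongr; exact norm_sub_node_le_of_mem_support_part hh hφ hz)
    _ = ρ0 * (1 + h * ρ0 / 2 * c₁ ^ 2 * c₂) := by
        field_simp

theorem St_subset_closedBall (hh : 0 ≤ h) {R c : ℝ} (hR : ρt d h ρ0 φ F k ≤ R)
    (hDF : ‖fderiv ℝ F (node d h k)‖ ≤ c) :
    St d h ρ0 φ F k ⊆ closedBall (F (node d h k)) (h * R * c) := by
  have hc : 0 ≤ c := (norm_nonneg _).trans hDF
  rintro _ ⟨w, hw, rfl⟩
  rw [mem_closedBall, dist_eq_norm, F1, add_sub_cancel_left]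
  rw [mem_closedBall, dist_eq_norm] at hw
  calc ‖fderiv ℝ F (node d h k) (w - node d h k)‖ ≤ c * ‖w - node d h k‖ :=
        (ContinuousLinearMap.le_opNorm _ _).trans (by gcongr)
    _ ≤ c * (h * R) := by gcongr; exact hw.trans (by gcongr)
    _ = h * R * c := by ring

end Flow

theorem enlarged_radii_and_supports_localized_general
    (d : ℕ) (hd : 1 ≤ d) (h : ℝ) (hh : 0 < h)
    (φ : (Fin d → ℝ) → ℝ)
    (ρ0 : ℝ) (hφsupp : ∀ x, φ x ≠ 0 → ‖x‖ ≤ ρ0)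
    (F : (Fin d → ℝ) ≃ (Fin d → ℝ))
    (hF : ContDiff ℝ 1 (F : (Fin d → ℝ) → (Fin d → ℝ)))
    (hB : ContDiff ℝ 2 (F.symm : (Fin d → ℝ) → (Fin d → ℝ)))
    (cF1 : ℝ) (hcF1 : ∀ (i : Fin d) (x : Fin d → ℝ),
      ∑ l : Fin d, |pd d l (fun y => F y i) x| ≤ cF1)
    (cB2 : ℝ) (hcB2 : ∀ (i : Fin d) (x : Fin d → ℝ),
      ∑ l1 : Fin d, ∑ l2 : Fin d,
        |pd d l1 (pd d l2 (fun y => F.symm y i)) x| ≤ cB2) :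
    ∀ k : Fin d → ℤ,
      ρt d h ρ0 φ F k ≤ ρ0 * (1 + h * ρ0 / 2 * cF1 ^ 2 * cB2) ∧
      St d h ρ0 φ F k ⊆
        Metric.closedBall (F (node d h k))
          (h * (ρ0 * (1 + h * ρ0 / 2 * cF1 ^ 2 * cB2)) * cF1) := by
  intro k
  have : Nonempty (Fin d) := ⟨⟨0, hd⟩⟩
  have hF_diff : Differentiable ℝ F := hF.differentiable one_ne_zero
  have hDF : ∀ x, ‖fderiv ℝ F x‖ ≤ cF1 := fun x =>
    norm_fderiv_le_of_sum_abs_pd_le (hF_diff x) fun i => hcF1 i x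
  have hD2B : ∀ x, ‖fderiv ℝ (fderiv ℝ F.symm) x‖ ≤ cB2 := fun x =>
    norm_fderiv_fderiv_le_of_sum_sum_abs_pd_pd_le (hB.differentiable two_ne_zero)
      ((hB.fderiv_right le_rfl).differentiable one_ne_zero x) fun i => hcB2 i x
  have hρt := ρt_le_of_norm_fderiv_le (k := k) hh hφsupp hF_diff hB hDF hD2B
  exact ⟨hρt, St_subset_closedBall hh.le hρt (hDF _)⟩

/-- the enlarged radii are uniformly controlled,
`ρ̃_{h,k} ≤ ρ̃ := ρ⁰ (1 + (hρ⁰/2)|F̄|₁²|B̄|₂)`, and the enlarged supports are localized,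
`Σ̃_{h,k} ⊆ B_∞(F̄(x⁰_k), h ρ̃ |F̄|₁)`. -/
theorem enlarged_radii_and_supports_localized
    (d : ℕ) (hd : 1 ≤ d) (h : ℝ) (hh : 0 < h)
    (φ : (Fin d → ℝ) → ℝ) (Lφ : ℝ≥0) (hφLip : LipschitzWith Lφ φ)
    (ρ0 : ℝ) (hρ0 : 0 < ρ0) (hφsupp : ∀ x, φ x ≠ 0 → ‖x‖ ≤ ρ0)
    (F : (Fin d → ℝ) ≃ (Fin d → ℝ))
    (hF : ContDiff ℝ 1 (F : (Fin d → ℝ) → (Fin d → ℝ)))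
    (hB : ContDiff ℝ 2 (F.symm : (Fin d → ℝ) → (Fin d → ℝ)))
    (cF1 : ℝ) (hcF1 : ∀ (i : Fin d) (x : Fin d → ℝ),
      ∑ l : Fin d, |pd d l (fun y => F y i) x| ≤ cF1)
    (cB2 : ℝ) (hcB2 : ∀ (i : Fin d) (x : Fin d → ℝ),
      ∑ l1 : Fin d, ∑ l2 : Fin d,
        |pd d l1 (pd d l2 (fun y => F.symm y i)) x| ≤ cB2) :
    ∀ k : Fin d → ℤ,
      ρt d h ρ0 φ F k ≤ ρ0 * (1 + h * ρ0 / 2 * cF1 ^ 2 * cB2) ∧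
      St d h ρ0 φ F k ⊆
        Metric.closedBall (F (node d h k))
          (h * (ρ0 * (1 + h * ρ0 / 2 * cF1 ^ 2 * cB2)) * cF1) :=
  enlarged_radii_and_supports_localized_general d hd h hh φ ρ0 hφsupp F hF hB cF1 hcF1 cB2 hcB2
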